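/- Let A∞, B∞, C∞ > 0 and ε > 0. Suppose μ_A, μ_B, μ_C ∈ [−1, ∞) satisfy the mass constraint 2 A∞² μ_A(μ_A + 2) + B∞² μ_B(μ_B + 2) + C∞² μ_C(μ_C + 2) = 0 and the lower bound (1 + μ_B)² ≥ ε²/B∞². Then ((1+μ_A) − (1+μ_B)²)² + (1+μ_B)²(μ_B − μ_C)² + ((1+μ_B)(1+μ_C) − (1+μ_A))² ≥ (1/4) min{ε²/B∞², 1} (μ_A² + μ_B² + μ_C²). -/
import Mathlib

set_option maxHeartbeats 800000


/- STATEMENT 19: Finite-dimensional inequality for the 3×3 system: if μ_A, μ_B, μ_C ∈ [-1,∞)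
satisfy 2A∞²μ_A(μ_A+2) + B∞²μ_B(μ_B+2) + C∞²μ_C(μ_C+2) = 0 and (1+μ_B)² ≥ ε²/B∞², then
((1+μ_A) - (1+μ_B)²)² + (1+μ_B)²(μ_B-μ_C)² + ((1+μ_B)(1+μ_C) - (1+μ_A))²
  ≥ ¼ min{ε²/B∞², 1} (μ_A² + μ_B² + μ_C²). -/

namespace Stmt19

/-- Subcase I.A : μB ≥ 0 and μA ≤ 0. -/
private lemma caseIA (u v w : ℝ) (hv : 0 ≤ v) (hu0 : u ≤ 0) :
    u^2+v^2+w^2 ≤ 4*(((1+u) - (1+v)^2)^2 + (1+v)^2*(v-w)^2 + ((1+v)*(1+w) - (1+u))^2) := by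
  nlinarith [mul_nonneg (neg_nonneg.2 hu0) (mul_nonneg hv (by linarith : (0:ℝ) ≤ v+2)),
    mul_nonneg (mul_nonneg (mul_nonneg hv hv) hv) (by linarith : (0:ℝ) ≤ v+4),
    sq_nonneg (2*v - w),
    mul_nonneg (mul_nonneg hv (by linarith : (0:ℝ) ≤ v+2)) (sq_nonneg (v-w)),
    sq_nonneg ((1+v)*(1+w) - (1+u)), sq_nonneg ((1+u) - (1+v)^2), sq_nonneg (v-w), sq_nonneg v]

/-- Subcase I.B : μB ≥ 0 and μC ≤ 0. -/
private lemma caseIB (u v w : ℝ) (hv : 0 ≤ v) (hw0 : w ≤ 0) :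
    u^2+v^2+w^2 ≤ 4*(((1+u) - (1+v)^2)^2 + (1+v)^2*(v-w)^2 + ((1+v)*(1+w) - (1+u))^2) := by
  set t1 : ℝ := (1+u) - (1+v)^2 with ht1
  set t2 : ℝ := (1+v)*(v-w) with ht2
  have hy : (0:ℝ) ≤ 1 + v := by linarith
  have hg : (0:ℝ) ≤ v*(v+2) := by nlinarith
  have hg2 : v*(v+2) ≤ 2*t2 := by rw [ht2]; nlinarith [mul_nonneg hy (neg_nonneg.2 hw0)]
  have hvw : v^2 + w^2 ≤ t2^2 := by
    rw [ht2]
    nlinarith [mul_nonneg (mul_nonneg (mul_nonneg hy hy) hv) (neg_nonneg.2 hw0),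
      mul_nonneg hg (sq_nonneg v), mul_nonneg hg (sq_nonneg w)]
  have hu2 : u^2 ≤ 8*t1^2 + 8*t1*t2 + 7*t2^2 := by
    have hu' : u = v*(v+2) + t1 := by rw [ht1]; ring
    rcases le_or_gt (t1 + t2) 0 with h | h
    · nlinarith [mul_nonneg hg (by linarith : (0:ℝ) ≤ 2*t2 - v*(v+2)),
        mul_nonneg hg (by linarith : (0:ℝ) ≤ -(t1+t2)), sq_nonneg (7*t1 + 4*t2)]
    · nlinarith [mul_nonneg hg (by linarith : (0:ℝ) ≤ 2*t2 - v*(v+2)),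
        mul_nonneg (by linarith : (0:ℝ) ≤ 2*t2 - v*(v+2)) (by linarith : (0:ℝ) ≤ t1+t2),
        sq_nonneg (7*t1 + 2*t2)]
  have hS : ((1+v)*(1+w) - (1+u)) = -(t1+t2) := by rw [ht1, ht2]; ring
  rw [hS]
  have h2 : t2^2 ≤ (1+v)^2*(v-w)^2 := by rw [ht2]; ring_nf; nlinarith []
  nlinarith [sq_nonneg t1, sq_nonneg (t1+t2)]

/-- Subcase II.A : μB ≤ 0 and μA ≥ 0. -/
private lemma caseIIA (u v w : ℝ) (hu : 0 ≤ u) (hv : -1 ≤ v) (hv0 : v ≤ 0) :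
    (1+v)^2*(u^2+v^2+w^2) ≤ 4*(((1+u) - (1+v)^2)^2 + (1+v)^2*(v-w)^2 + ((1+v)*(1+w) - (1+u))^2) := by
  have hng : 0 ≤ -(v*(v+2)) := by nlinarith
  nlinarith [mul_nonneg hu hng,
    mul_nonneg (mul_nonneg (by linarith : (0:ℝ) ≤ -v) (by linarith : (0:ℝ) ≤ v+1)) (by linarith : (0:ℝ) ≤ v+3),
    mul_nonneg hng (sq_nonneg u), mul_nonneg hng (sq_nonneg v),
    sq_nonneg ((1+v)*(2*v-w)), sq_nonneg ((1+u) - (1+v)^2), sq_nonneg ((1+v)*(1+w) - (1+u)),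
    sq_nonneg ((1+v)*(v-w)), mul_nonneg hng (sq_nonneg ((1+v)*(v-w)))]

/-- Subcase II.B : μB ≤ 0 and μC ≥ 0. -/
private lemma caseIIB (u v w : ℝ) (hv : -1 ≤ v) (hv0 : v ≤ 0) (hw : 0 ≤ w) :
    (1+v)^2*(u^2+v^2+w^2) ≤ 4*(((1+u) - (1+v)^2)^2 + (1+v)^2*(v-w)^2 + ((1+v)*(1+w) - (1+u))^2) := by
  set t1 : ℝ := (1+u) - (1+v)^2 with ht1
  set t2 : ℝ := (1+v)*(v-w) with ht2
  have hy0 : (0:ℝ) ≤ 1 + v := by linarith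
  have hy1 : (1:ℝ) + v ≤ 1 := by linarith
  set G : ℝ := (1+v)*(v*(v+2)) with hG
  set T : ℝ := (1+v)*t1 with hT
  have hGle : G ≤ 0 := by rw [hG]; nlinarith
  have hG2t2 : 2*t2 ≤ G := by rw [hG, ht2]; nlinarith [mul_nonneg hy0 (sq_nonneg v), mul_nonneg hy0 hw]
  have ht2le : t2 ≤ 0 := by nlinarith
  have hTt1 : 0 ≤ T*(t1 - T) := by
    have : T*(t1-T) = (1+v)*(-v)*t1^2 := by rw [hT]; ring
    rw [this]; exact mul_nonneg (mul_nonneg hy0 (by linarith)) (sq_nonneg t1)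
  have hT2 : T^2 ≤ t1^2 := by nlinarith [sq_nonneg T, sq_nonneg t1]
  have hvw : (1+v)^2*(v^2+w^2) ≤ t2^2 := by
    rw [ht2]; nlinarith [mul_nonneg (mul_nonneg (mul_nonneg hy0 hy0) (by linarith : (0:ℝ) ≤ -v)) hw]
  have hu2 : (1+v)^2*u^2 = (G+T)^2 := by rw [hG, hT, ht1]; ring
  have hkey : (G+T)^2 ≤ 4*t1^2 + 2*t2^2 + 4*(t1+t2)^2 := by
    nlinarith [mul_nonneg (neg_nonneg.2 hGle) (by linarith : (0:ℝ) ≤ G - 2*t2),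
      hTt1, hT2, sq_nonneg (2*t1+t2), sq_nonneg (t1+t2), sq_nonneg (G+T),
      mul_nonneg (neg_nonneg.2 hGle) (neg_nonneg.2 ht2le),
      mul_nonneg (mul_nonneg (neg_nonneg.2 ht2le) (by linarith : (0:ℝ) ≤ G - 2*t2)) (by positivity : (0:ℝ) ≤ (1:ℝ))]
  have hS : ((1+v)*(1+w) - (1+u)) = -(t1+t2) := by rw [ht1, ht2]; ring
  rw [hS]
  have h2 : t2^2 = (1+v)^2*(v-w)^2 := by rw [ht2]; ring
  nlinarith [sq_nonneg t1, sq_nonneg (t1+t2), hvw, hu2, hkey]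

theorem threeByThree_finite_dimensional_inequality
    (Ainf Binf Cinf : ℝ) (hA : 0 < Ainf) (hB : 0 < Binf) (hC : 0 < Cinf)
    (ε : ℝ) (hε : 0 < ε)
    (μA μB μC : ℝ) (hμA : -1 ≤ μA) (hμB : -1 ≤ μB) (hμC : -1 ≤ μC)
    (hmass : 2 * Ainf ^ 2 * (μA * (μA + 2)) + Binf ^ 2 * (μB * (μB + 2))
      + Cinf ^ 2 * (μC * (μC + 2)) = 0)
    (hlow : ε ^ 2 / Binf ^ 2 ≤ (1 + μB) ^ 2) :
    (1 / 4) * min (ε ^ 2 / Binf ^ 2) 1 * (μA ^ 2 + μB ^ 2 + μC ^ 2) ≤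
      ((1 + μA) - (1 + μB) ^ 2) ^ 2 + (1 + μB) ^ 2 * (μB - μC) ^ 2
        + ((1 + μB) * (1 + μC) - (1 + μA)) ^ 2 := by
  set m : ℝ := min (ε ^ 2 / Binf ^ 2) 1 with hm
  have hm1 : m ≤ 1 := min_le_right _ _
  have hmy : m ≤ (1 + μB) ^ 2 := le_trans (min_le_left _ _) hlow
  have hQ : 0 ≤ μA ^ 2 + μB ^ 2 + μC ^ 2 := by positivity
  have hA2 : (0:ℝ) < Ainf ^ 2 := by positivity
  have hB2 : (0:ℝ) < Binf ^ 2 := by positivity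
  have hC2 : (0:ℝ) < Cinf ^ 2 := by positivity
  rcases le_total 0 μB with hv | hv
  · -- μB ≥ 0 : one of μA, μC must be ≤ 0
    have hdisj : μA ≤ 0 ∨ μC ≤ 0 := by
      by_contra h
      push_neg at h
      obtain ⟨h1, h2⟩ := h
      nlinarith [mul_pos hA2 (mul_pos h1 (show (0:ℝ) < μA + 2 by linarith)),
        mul_pos hC2 (mul_pos h2 (show (0:ℝ) < μC + 2 by linarith)),
        mul_nonneg hB2.le (mul_nonneg hv (show (0:ℝ) ≤ μB + 2 by linarith))]
    have hQ4S : μA ^ 2 + μB ^ 2 + μC ^ 2 ≤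
        4*(((1+μA) - (1+μB)^2)^2 + (1+μB)^2*(μB-μC)^2 + ((1+μB)*(1+μC) - (1+μA))^2) := by
      rcases hdisj with h | h
      · exact caseIA μA μB μC hv h
      · exact caseIB μA μB μC hv h
    have := mul_le_mul_of_nonneg_right hm1 hQ
    nlinarith [hQ4S]
  · -- μB ≤ 0 : one of μA, μC must be ≥ 0
    have hdisj : 0 ≤ μA ∨ 0 ≤ μC := by
      by_contra h
      push_neg at h
      obtain ⟨h1, h2⟩ := h
      nlinarith [mul_pos hA2 (mul_pos (show (0:ℝ) < -μA by linarith) (show (0:ℝ) < μA + 2 by linarith)),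
        mul_pos hC2 (mul_pos (show (0:ℝ) < -μC by linarith) (show (0:ℝ) < μC + 2 by linarith)),
        mul_nonneg hB2.le (mul_nonneg (show (0:ℝ) ≤ -μB by linarith) (show (0:ℝ) ≤ μB + 2 by linarith))]
    have hQ4S : (1+μB)^2 * (μA ^ 2 + μB ^ 2 + μC ^ 2) ≤
        4*(((1+μA) - (1+μB)^2)^2 + (1+μB)^2*(μB-μC)^2 + ((1+μB)*(1+μC) - (1+μA))^2) := by
      rcases hdisj with h | h
      · exact caseIIA μA μB μC h hμB hv
      · exact caseIIB μA μB μC hμB hv h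
    have := mul_le_mul_of_nonneg_right hmy hQ
    nlinarith [hQ4S]

end Stmt19
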